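/- Let X be a set, F a nonempty class of real-valued functions on X, z_1, …, z_n ∈ X with Z the corresponding multiset, q_1, …, q_n ∈ ℝ, and f* ∈ F. For g : X → ℝ write ‖g‖_D := (∑_{t=1}^n (g(z_t) − q_t)²)^{1/2}. Let B, C ≥ 0 and suppose that for every f ∈ F: ∑_{t=1}^{n} (f(z_t) − f*(z_t))·(f*(z_t) − q_t) ≥ −B·(‖f − f*‖_Z + 2) − C. If f̂ ∈ F satisfies ‖f̂‖_D ≤ ‖f‖_D for all f ∈ F (i.e., f̂ is a least-squares minimizer over F), then ‖f̂ − f*‖²_Z ≤ 2B·‖f̂ − f*‖_Z + 4B + 2C, and consequently ‖f̂ − f*‖_Z ≤ 2B + √(4B + 2C). -/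

import Mathlib

/-- The squared data norm `‖g‖_Z² = ∑_{z ∈ Z} g(z)²`, counting multiplicity. -/
noncomputable def msNormSq {X : Type*} (Z : Multiset X) (g : X → ℝ) : ℝ :=
  (Z.map fun x => g x ^ 2).sum

/-- The data norm `‖g‖_Z = (∑_{z ∈ Z} g(z)²)^{1/2}`. -/
noncomputable def msNorm {X : Type*} (Z : Multiset X) (g : X → ℝ) : ℝ :=
  Real.sqrt (msNormSq Z g)

/-!
Expanding the squares around `f*` gives
`‖f̂ - q‖² = ‖f̂ - f*‖² + 2⟨f̂ - f*, f* - q⟩ + ‖f* - q‖²`, so comparing `f̂` with the competitor `f*`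
leaves `‖f̂ - f*‖² ≤ -2⟨f̂ - f*, f* - q⟩`, which the cross-term hypothesis bounds by
`2B(‖f̂ - f*‖ + 2) + 2C`. Solving the quadratic inequality `a² ≤ 2Ba + K` for `a` gives the
second bound.
-/

lemma msNormSq_map_finset {X ι : Type*} (s : Finset ι) (z : ι → X) (g : X → ℝ) :
    msNormSq (s.val.map z) g = ∑ t ∈ s, g (z t) ^ 2 := by
  simp only [msNormSq, Multiset.map_map]
  rfl

lemma msNormSq_nonneg {X : Type*} (Z : Multiset X) (g : X → ℝ) : 0 ≤ msNormSq Z g :=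
  Multiset.sum_nonneg fun _ hx => by
    obtain ⟨x, -, rfl⟩ := Multiset.mem_map.1 hx
    exact sq_nonneg _

lemma msNorm_sq {X : Type*} (Z : Multiset X) (g : X → ℝ) : msNorm Z g ^ 2 = msNormSq Z g :=
  Real.sq_sqrt (msNormSq_nonneg Z g)

lemma Finset.sum_sub_sq_eq_add_cross {ι : Type*} (s : Finset ι) (a b q : ι → ℝ) :
    ∑ t ∈ s, (a t - q t) ^ 2 =
      ∑ t ∈ s, (a t - b t) ^ 2 + 2 * ∑ t ∈ s, (a t - b t) * (b t - q t) +
        ∑ t ∈ s, (b t - q t) ^ 2 := by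
  rw [Finset.mul_sum, ← Finset.sum_add_distrib, ← Finset.sum_add_distrib]
  exact Finset.sum_congr rfl fun t _ => by ring

/-- If `a ≤ 2B` there is nothing to prove; otherwise `(a - 2B)² ≤ a (a - 2B) ≤ K`. -/
lemma le_two_mul_add_sqrt_of_sq_le {a B K : ℝ} (hB : 0 ≤ B)
    (h : a ^ 2 ≤ 2 * B * a + K) : a ≤ 2 * B + Real.sqrt K := by
  rcases le_total a (2 * B) with hle | hlt
  · linarith [Real.sqrt_nonneg K]
  · have hsq : (a - 2 * B) ^ 2 ≤ K := by nlinarith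
    linarith [Real.le_sqrt_of_sq_le hsq]

theorem least_squares_basic_inequality_general {X : Type*} (F : Set (X → ℝ))
    (n : ℕ) (z : ℕ → X) (q : ℕ → ℝ)
    (fstar : X → ℝ) (hfstar : fstar ∈ F)
    (B C : ℝ) (hB : 0 ≤ B)
    (hcross : ∀ f ∈ F,
      -B * (msNorm ((Finset.Icc 1 n).val.map z) (fun x => f x - fstar x) + 2) - C ≤
        ∑ t ∈ Finset.Icc 1 n, (f (z t) - fstar (z t)) * (fstar (z t) - q t))
    (fhat : X → ℝ) (hfhat : fhat ∈ F)
    (hmin : ∀ f ∈ F,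
      Real.sqrt (∑ t ∈ Finset.Icc 1 n, (fhat (z t) - q t) ^ 2) ≤
        Real.sqrt (∑ t ∈ Finset.Icc 1 n, (f (z t) - q t) ^ 2)) :
    msNormSq ((Finset.Icc 1 n).val.map z) (fun x => fhat x - fstar x) ≤
        2 * B * msNorm ((Finset.Icc 1 n).val.map z) (fun x => fhat x - fstar x) +
          4 * B + 2 * C ∧
      msNorm ((Finset.Icc 1 n).val.map z) (fun x => fhat x - fstar x) ≤
        2 * B + Real.sqrt (4 * B + 2 * C) := by
  have hbetter : ∑ t ∈ Finset.Icc 1 n, (fhat (z t) - q t) ^ 2 ≤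
      ∑ t ∈ Finset.Icc 1 n, (fstar (z t) - q t) ^ 2 :=
    (Real.sqrt_le_sqrt_iff (Finset.sum_nonneg fun _ _ => sq_nonneg _)).1 (hmin fstar hfstar)
  rw [Finset.sum_sub_sq_eq_add_cross _ _ (fun t => fstar (z t))] at hbetter
  have hbasic : msNormSq ((Finset.Icc 1 n).val.map z) (fun x => fhat x - fstar x) ≤
      2 * B * msNorm ((Finset.Icc 1 n).val.map z) (fun x => fhat x - fstar x) +
        4 * B + 2 * C := by
    rw [msNormSq_map_finset]
    linarith [hcross fhat hfhat]
  refine ⟨hbasic, le_two_mul_add_sqrt_of_sq_le hB ?_⟩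
  rw [msNorm_sq]
  linarith

/-- the deterministic least-squares "basic inequality" of Lemma 6 of the
paper: if the cross term is bounded below by `−B(‖f − f*‖_Z + 2) − C` for every `f ∈ F` and
`f̂` is a least-squares minimizer over `F`, then `‖f̂ − f*‖²_Z ≤ 2B‖f̂ − f*‖_Z + 4B + 2C`, and
consequently `‖f̂ − f*‖_Z ≤ 2B + √(4B + 2C)`. -/
theorem least_squares_basic_inequality {X : Type*} (F : Set (X → ℝ)) (hFne : F.Nonempty)
    (n : ℕ) (z : ℕ → X) (q : ℕ → ℝ)
    (fstar : X → ℝ) (hfstar : fstar ∈ F)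
    (B C : ℝ) (hB : 0 ≤ B) (hC : 0 ≤ C)
    (hcross : ∀ f ∈ F,
      -B * (msNorm ((Finset.Icc 1 n).val.map z) (fun x => f x - fstar x) + 2) - C ≤
        ∑ t ∈ Finset.Icc 1 n, (f (z t) - fstar (z t)) * (fstar (z t) - q t))
    (fhat : X → ℝ) (hfhat : fhat ∈ F)
    (hmin : ∀ f ∈ F,
      Real.sqrt (∑ t ∈ Finset.Icc 1 n, (fhat (z t) - q t) ^ 2) ≤
        Real.sqrt (∑ t ∈ Finset.Icc 1 n, (f (z t) - q t) ^ 2)) :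
    msNormSq ((Finset.Icc 1 n).val.map z) (fun x => fhat x - fstar x) ≤
        2 * B * msNorm ((Finset.Icc 1 n).val.map z) (fun x => fhat x - fstar x) +
          4 * B + 2 * C ∧
      msNorm ((Finset.Icc 1 n).val.map z) (fun x => fhat x - fstar x) ≤
        2 * B + Real.sqrt (4 * B + 2 * C) :=
  least_squares_basic_inequality_general F n z q fstar hfstar B C hB hcross fhat hfhat hmin
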